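/- For any natural number n ≥ 2, the polynomial (X+1)^n - X^n is irreducible over ℚ if and only if n is prime. -/

import Mathlib

/-!
If `d` is a proper divisor of `n`, then `(X + 1) ^ d - X ^ d` divides `(X + 1) ^ n - X ^ n`
(it is `a - b` dividing `a ^ k - b ^ k`) and has smaller positive degree `d - 1`.

If `n = p` is prime, reversing the coefficients of `(X + 1) ^ p - X ^ p` gives
`((X + 1) ^ p - 1) / X = Φ_p(X + 1)`, which is irreducible over `ℚ`. Reversal is multiplicative
over a domain, so it preserves irreducibility.
-/

open Polynomial Finset

namespace Polynomial

section Mirror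

variable {R : Type*} [Semiring R] [NoZeroDivisors R]

noncomputable def mirrorMulEquiv : R[X] ≃* R[X] where
  toFun := mirror
  invFun := mirror
  left_inv := mirror_involutive
  right_inv := mirror_involutive
  map_mul' p q := mirror_mul_of_domain p q

theorem irreducible_mirror_iff {f : R[X]} : Irreducible f.mirror ↔ Irreducible f :=
  MulEquiv.irreducible_iff (f := mirrorMulEquiv) (x := f)

end Mirror

variable {R : Type*} [CommRing R]

theorem coeff_X_add_one_pow_sub_X_pow (n k : ℕ) :
    ((X + 1) ^ n - X ^ n : R[X]).coeff k = if k < n then (n.choose k : R) else 0 := by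
  rw [coeff_sub, coeff_X_add_one_pow, coeff_X_pow]
  rcases lt_trichotomy k n with hk | rfl | hk
  · simp [hk, hk.ne]
  · simp
  · simp [hk.not_gt, hk.ne', Nat.choose_eq_zero_of_lt hk]

theorem coeff_geom_sum_X_comp_X_add_one (n k : ℕ) :
    ((∑ i ∈ range n, (X : R[X]) ^ i).comp (X + 1)).coeff k =
      if k < n then (n.choose (k + 1) : R) else 0 := by
  rw [geom_sum_X_comp_X_add_one_eq_sum, finsetSum_coeff]
  simp [coeff_natCast_mul, coeff_X_pow]

theorem X_add_one_pow_sub_X_pow_dvd {d n : ℕ} (h : d ∣ n) :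
    ((X + 1) ^ d - X ^ d : R[X]) ∣ (X + 1) ^ n - X ^ n := by
  obtain ⟨k, rfl⟩ := h
  simpa only [pow_mul] using sub_dvd_pow_sub_pow ((X + 1) ^ d) (X ^ d) k

variable [CharZero R]

theorem natDegree_X_add_one_pow_sub_X_pow (n : ℕ) :
    ((X + 1) ^ n - X ^ n : R[X]).natDegree = n - 1 := by
  rcases n with _ | n
  · simp
  refine natDegree_eq_of_le_of_coeff_ne_zero ?_ ?_
  · exact natDegree_le_iff_coeff_eq_zero.2 fun k hk => by
      rw [coeff_X_add_one_pow_sub_X_pow, if_neg (by omega)]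
  · rw [coeff_X_add_one_pow_sub_X_pow, if_pos (by omega), Nat.add_sub_cancel,
      Nat.choose_succ_self_right]
    exact Nat.cast_ne_zero.2 n.succ_ne_zero

theorem mirror_geom_sum_X_comp_X_add_one (n : ℕ) :
    ((∑ i ∈ range n, (X : R[X]) ^ i).comp (X + 1)).mirror = (X + 1) ^ n - X ^ n := by
  rcases n with _ | n
  · simp
  set S := (∑ i ∈ range (n + 1), (X : R[X]) ^ i).comp (X + 1)
  have hdeg : S.natDegree = n := by
    refine natDegree_eq_of_le_of_coeff_ne_zero ?_ ?_
    · exact natDegree_le_iff_coeff_eq_zero.2 fun k hk => by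
        rw [coeff_geom_sum_X_comp_X_add_one, if_neg (by omega)]
    · rw [coeff_geom_sum_X_comp_X_add_one, if_pos (by omega), Nat.choose_self, Nat.cast_one]
      exact one_ne_zero
  have htrail : S.natTrailingDegree = 0 :=
    natTrailingDegree_eq_zero.2 <| Or.inr <| by
      rw [coeff_geom_sum_X_comp_X_add_one, if_pos (by omega), Nat.choose_one_right]
      exact Nat.cast_ne_zero.2 n.succ_ne_zero
  ext k
  rw [coeff_mirror, hdeg, htrail, add_zero, coeff_X_add_one_pow_sub_X_pow]
  rcases le_or_gt k n with hk | hk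
  · rw [revAt_le hk, coeff_geom_sum_X_comp_X_add_one, if_pos (by omega), if_pos (by omega),
      ← Nat.sub_add_comm hk, Nat.choose_symm (by omega)]
  · rw [revAt_eq_self_of_lt hk, coeff_geom_sum_X_comp_X_add_one, if_neg (by omega),
      if_neg (by omega)]

theorem not_irreducible_X_add_one_pow_sub_X_pow [IsDomain R] {n : ℕ} (hn : 2 ≤ n)
    (hnp : ¬n.Prime) : ¬Irreducible ((X + 1) ^ n - X ^ n : R[X]) := by
  intro hirr
  have hp : n.minFac.Prime := Nat.minFac_prime (by omega)
  have hp2 := hp.two_le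
  have hlt : n.minFac < n := (Nat.minFac_le (by omega)).lt_of_ne fun h => hnp (h ▸ hp)
  rcases hirr.dvd_iff.1 (X_add_one_pow_sub_X_pow_dvd n.minFac_dvd) with hunit | hassoc
  · have := natDegree_eq_zero_of_isUnit hunit
    rw [natDegree_X_add_one_pow_sub_X_pow] at this
    omega
  · have := natDegree_eq_of_degree_eq (degree_eq_degree_of_associated hassoc)
    rw [natDegree_X_add_one_pow_sub_X_pow, natDegree_X_add_one_pow_sub_X_pow] at this
    omega

end Polynomial

theorem Nat.Prime.irreducible_X_add_one_pow_sub_X_pow {p : ℕ} (hp : p.Prime) :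
    Irreducible ((X + 1) ^ p - X ^ p : ℚ[X]) := by
  have := Fact.mk hp
  have hcomp : (cyclotomic p ℚ).comp (X + 1) = algEquivAevalXAddC 1 (cyclotomic p ℚ) := by
    rw [algEquivAevalXAddC_apply, comp_eq_aeval, map_one]
  rw [← mirror_geom_sum_X_comp_X_add_one, irreducible_mirror_iff, ← cyclotomic_prime, hcomp]
  exact (cyclotomic.irreducible_rat hp.pos).map _

theorem stmt_6 (n : ℕ) (hn : 2 ≤ n) :
    Irreducible ((X + 1) ^ n - X ^ n : ℚ[X]) ↔ n.Prime :=
  ⟨not_imp_not.1 (not_irreducible_X_add_one_pow_sub_X_pow hn),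
    Nat.Prime.irreducible_X_add_one_pow_sub_X_pow⟩
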